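/- arXiv:2003.05906 — 3 statements merged into one kernel-verified Lean document; each statement's English description precedes it below -/
import Mathlib

section
/- The determinant of the K×K matrix whose (i,j) entry is the binomial coefficient C(2j+i-2, K-1) (with the convention that C(n,m)=0 when m>n) equals (-2)^(K(K-1)/2). -/
/-!
By Vandermonde's convolution, `C(2j + i + 1, K - 1) = ∑ₖ C(i + 1, k) C(2j, K - 1 - k)`, so the
matrix factors as `L * (R')ᵀ`, where `L = (C(i + 1, k))` and `R'` is `R = (C(2j, k))` with its
columns reversed. Reversing `K` columns costs the sign `(-1)^(K(K-1)/2)`. Scaling column `k` of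
a matrix `(C(a i + b, k))` by `k!` turns it into the matrix of the falling factorials
`(a i + b)(a i + b - 1)⋯(a i + b - k + 1)`, whose determinant is the Vandermonde determinant
`∏_{i<j} a (j - i) = a^(K(K-1)/2) ∏ k!`; hence `det L = 1` and `det R = 2^(K(K-1)/2)`.
-/

open Finset Matrix
open scoped Nat

theorem Fin.sum_card_Ioi (n : ℕ) : ∑ i : Fin n, #(Ioi i) = n * (n - 1) / 2 := by
  simp only [Fin.card_Ioi]
  rw [Fin.sum_univ_eq_sum_range (fun i => n - 1 - i), sum_range_reflect (fun i => i) n,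
    sum_range_id]

theorem Fin.sign_revPerm (n : ℕ) :
    Equiv.Perm.sign (Fin.revPerm : Equiv.Perm (Fin n)) = (-1) ^ (n * (n - 1) / 2) := by
  rw [Equiv.Perm.sign_eq_prod_prod_Ioi, ← Fin.sum_card_Ioi, ← prod_pow_eq_pow_sum]
  refine prod_congr rfl fun i _ => ?_
  rw [prod_congr rfl fun j hj => if_neg ?_, Finset.prod_const]
  simpa [Fin.rev_lt_rev] using (mem_Ioi.mp hj).le

theorem Matrix.det_vandermonde_const_mul {R : Type*} [CommRing R] {n : ℕ} (c : R)
    (v : Fin n → R) :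
    (vandermonde fun i => c * v i).det = c ^ (n * (n - 1) / 2) * (vandermonde v).det := by
  simp only [det_vandermonde, ← mul_sub, prod_mul_distrib, prod_const, prod_pow_eq_pow_sum,
    Fin.sum_card_Ioi]

theorem Matrix.det_vandermonde_id_eq_prod_factorial (n : ℕ) :
    (vandermonde fun i : Fin n => (i : ℤ)).det = ∏ i : Fin n, ((i : ℕ)! : ℤ) := by
  cases n with
  | zero => simp
  | succ m =>
    rw [det_vandermonde_id_eq_superFactorial, Fin.prod_univ_eq_prod_range (fun i => (i ! : ℤ)),
      ← Nat.cast_prod, Nat.prod_range_succ_factorial]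

theorem Matrix.prod_factorial_mul_det_choose {n : ℕ} (v : Fin n → ℕ) :
    (∏ j : Fin n, ((j : ℕ)! : ℤ)) * (of fun i j : Fin n => ((v i).choose j : ℤ)).det =
      (vandermonde fun i => (v i : ℤ)).det := by
  rw [det_eval_matrixOfPolynomials_eq_det_vandermonde _ (fun j => descPochhammer ℤ j)
    (fun j => descPochhammer_natDegree ℤ j) (fun j => monic_descPochhammer ℤ j), ← det_mul_row]
  congr 1
  ext i j
  simp only [of_apply, descPochhammer_eval_eq_descFactorial,
    Nat.descFactorial_eq_factorial_mul_choose]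
  push_cast
  rfl

theorem Matrix.det_choose_mul_add (n a b : ℕ) :
    (of fun i j : Fin n => ((a * i + b).choose j : ℤ)).det = (a : ℤ) ^ (n * (n - 1) / 2) := by
  have hF : (∏ j : Fin n, ((j : ℕ)! : ℤ)) ≠ 0 :=
    prod_ne_zero_iff.mpr fun j _ => by exact_mod_cast (Nat.factorial_pos j).ne'
  refine mul_left_cancel₀ hF ?_
  rw [prod_factorial_mul_det_choose]
  push_cast
  rw [det_vandermonde_add, det_vandermonde_const_mul, det_vandermonde_id_eq_prod_factorial, mul_comm]

theorem Nat.add_choose_eq_sum_fin (m p n : ℕ) :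
    (m + p).choose n = ∑ k : Fin (n + 1), m.choose k * p.choose (Fin.rev k) := by
  rw [Nat.add_choose_eq, Finset.Nat.sum_antidiagonal_eq_sum_range_succ_mk,
    ← Fin.sum_univ_eq_sum_range]
  simp [Fin.val_rev]

theorem binom_det_eq_neg_two_pow (K : ℕ) (hK : 0 < K) :
    (Matrix.of fun i j : Fin K =>
        ((2 * (j : ℕ) + (i : ℕ) + 1).choose (K - 1) : ℤ)).det =
      (-2) ^ (K * (K - 1) / 2) := by
  obtain ⟨n, rfl⟩ := Nat.exists_eq_add_one_of_ne_zero hK.ne'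
  have hfactor : (of fun i j : Fin (n + 1) => ((2 * (j : ℕ) + i + 1).choose (n + 1 - 1) : ℤ)) =
      (of fun i k : Fin (n + 1) => ((1 * (i : ℕ) + 1).choose k : ℤ)) *
        ((of fun j k : Fin (n + 1) => ((2 * (j : ℕ) + 0).choose k : ℤ)).submatrix id
          Fin.revPerm)ᵀ := by
    ext i j
    rw [of_apply, Nat.add_sub_cancel, add_comm (2 * (j : ℕ)), add_right_comm,
      Nat.add_choose_eq_sum_fin]
    simp [mul_apply]
  rw [hfactor, det_mul, det_transpose, det_permute', det_choose_mul_add, det_choose_mul_add,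
    Fin.sign_revPerm]
  simp [← mul_pow]
end

section
/- The determinant of the K×K lower-Hessenberg Toeplitz matrix T with entries T_{i,j} = 1/(j+1-i)! if i ≤ j+1 and 0 otherwise equals 1/K!. -/
/-!
Since `1 / (j + 1 - i)! = i! * C(j + 1, i) / (j + 1)!`, the matrix factors as
`diag(i!) * [C(j + 1, i)] * diag(1 / (j + 1)!)`. Pascal's rule writes `[C(j + 1, i)]` as
`(1 + S) * [C(j, i)]`, with `S` the subdiagonal shift, a product of a lower and an upper
unitriangular matrix, so it has determinant `1`. What is left is the telescoping product
`∏ i! / (i + 1)! = 1 / K!`.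
-/

open Matrix Finset Nat

section Pascal

variable {R : Type*} [CommRing R] (n : ℕ)

def subdiagonalShift : Matrix (Fin n) (Fin n) R :=
  of fun i k => if (k : ℕ) + 1 = i then 1 else 0

theorem det_one_add_subdiagonalShift :
    (1 + subdiagonalShift n : Matrix (Fin n) (Fin n) R).det = 1 := by
  rw [det_of_isLowerTriangular]
  · simp [subdiagonalShift]
  · intro i k (hik : (i : ℕ) < k)
    simp only [subdiagonalShift, Matrix.add_apply, one_apply, of_apply, Fin.ext_iff]
    rw [if_neg (by omega), if_neg (by omega), add_zero]

theorem subdiagonalShift_mul_of_apply (f : ℕ → Fin n → R) (i j : Fin n) :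
    (subdiagonalShift n * of (fun (i : Fin n) j => f i j) : Matrix (Fin n) (Fin n) R) i j =
      if (i : ℕ) = 0 then 0 else f (i - 1) j := by
  simp only [subdiagonalShift, mul_apply, of_apply, ite_mul, one_mul, zero_mul]
  split_ifs with hi
  · exact sum_eq_zero fun k _ => if_neg (by omega)
  · set p : Fin n := ⟨(i : ℕ) - 1, by omega⟩
    have hp : ∀ k : Fin n, k ≠ p → (k : ℕ) + 1 ≠ (i : ℕ) := fun k hk hki =>
      hk (Fin.ext (by dsimp only [p]; omega))
    rw [sum_eq_single p (fun k _ hk => if_neg (hp k hk)) (by simp)]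
    exact if_pos (Nat.sub_add_cancel (by omega))

theorem det_of_choose_eq_one : (of fun i j : Fin n => ((j : ℕ).choose i : R)).det = 1 := by
  rw [det_of_isUpperTriangular]
  · simp
  · intro i j hij
    simp [Nat.choose_eq_zero_of_lt (show (j : ℕ) < i from hij)]

theorem of_choose_succ_eq_one_add_subdiagonalShift_mul :
    (of fun i j : Fin n => (((j : ℕ) + 1).choose i : R)) =
      (1 + subdiagonalShift n) * of fun i j : Fin n => ((j : ℕ).choose i : R) := by
  ext i j
  rw [add_mul, one_mul, Matrix.add_apply,
    subdiagonalShift_mul_of_apply n fun i j => ((j : ℕ).choose i : R)]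
  obtain ⟨_ | m, _⟩ := i
  · simp
  · simp [Nat.choose_succ_succ', add_comm]

theorem det_of_choose_succ_eq_one :
    (of fun i j : Fin n => (((j : ℕ) + 1).choose i : R)).det = 1 := by
  rw [of_choose_succ_eq_one_add_subdiagonalShift_mul, det_mul, det_one_add_subdiagonalShift,
    det_of_choose_eq_one, one_mul]

end Pascal

section Toeplitz

variable {𝕜 : Type*} [Field 𝕜] [CharZero 𝕜] (n : ℕ)

theorem toeplitz_inv_factorial_eq_diagonal_mul_mul_diagonal :
    (of fun i j : Fin n =>
        if (i : ℕ) ≤ (j : ℕ) + 1 then (1 : 𝕜) / ((j : ℕ) + 1 - (i : ℕ))! else 0) =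
      diagonal (fun i : Fin n => ((i : ℕ)! : 𝕜)) *
        (of fun i j : Fin n => (((j : ℕ) + 1).choose i : 𝕜)) *
        diagonal (fun j : Fin n => (1 : 𝕜) / ((j : ℕ) + 1)!) := by
  ext i j
  rw [mul_diagonal, diagonal_mul, of_apply, of_apply]
  split_ifs with h
  · have hi : ((i : ℕ)! : 𝕜) ≠ 0 := by exact_mod_cast (i : ℕ).factorial_ne_zero
    have hj : (((j : ℕ) + 1)! : 𝕜) ≠ 0 := by exact_mod_cast ((j : ℕ) + 1).factorial_ne_zero
    rw [Nat.cast_choose 𝕜 h]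
    field_simp
  · rw [Nat.choose_eq_zero_of_lt (by omega), Nat.cast_zero, mul_zero, zero_mul]

theorem prod_factorial_mul_one_div_factorial_succ :
    ∏ i : Fin n, ((i : ℕ)! : 𝕜) * (1 / ((i : ℕ) + 1)!) = 1 / n ! := by
  rw [Fin.prod_univ_eq_prod_range (fun i => (i ! : 𝕜) * (1 / (i + 1)!))]
  induction n with
  | zero => simp
  | succ n ih =>
    rw [prod_range_succ, ih, Nat.factorial_succ n]
    push_cast
    field_simp

end Toeplitz

theorem toeplitz_det_eq_inv_factorial_general (K : ℕ) :
    (Matrix.of fun i j : Fin K =>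
        if (i : ℕ) ≤ (j : ℕ) + 1 then
          (1 : ℚ) / (Nat.factorial ((j : ℕ) + 1 - (i : ℕ)))
        else 0).det = 1 / (Nat.factorial K) := by
  rw [toeplitz_inv_factorial_eq_diagonal_mul_mul_diagonal, det_mul, det_mul, det_diagonal,
    det_diagonal, det_of_choose_succ_eq_one, mul_one, ← prod_mul_distrib,
    prod_factorial_mul_one_div_factorial_succ]

theorem toeplitz_det_eq_inv_factorial (K : ℕ) (hK : 0 < K) :
    (Matrix.of fun i j : Fin K =>
        if (i : ℕ) ≤ (j : ℕ) + 1 then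
          (1 : ℚ) / (Nat.factorial ((j : ℕ) + 1 - (i : ℕ)))
        else 0).det = 1 / (Nat.factorial K) :=
  toeplitz_det_eq_inv_factorial_general K
end

section
/- The signed sum over permutations σ of {1,...,K} satisfying σ(j) ≤ j+1 for all j, of sgn(σ) divided by the product over j of (j+1-σ(j))!, equals 1/K!. -/
/-!
The sum is the Leibniz expansion of the determinant of the matrix `M i j = 1 / (j + 1 - i)!`
(zero for `i > j + 1`): a permutation violating `σ j ≤ j + 1` picks up a zero entry.
Scaling row `i` by `i!` and column `j` by `1 / (j + 1)!` turns `M` into the matrix of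
binomial coefficients `(j + 1).choose i`, which by Pascal's rule is a unit lower bidiagonal
matrix times the unit upper triangular Pascal matrix, so it has determinant `1`.
Hence `det M = ∏_{j < K} j! / (j + 1)! = 1 / K!`.
-/

open Finset Matrix Equiv Nat

theorem Fin.sum_univ_ite_val_eq {M : Type*} [AddCommMonoid M] {n : ℕ} (m : ℕ)
    (f : Fin n → M) :
    ∑ k : Fin n, (if m = k then f k else 0) = if h : m < n then f ⟨m, h⟩ else 0 := by
  split_ifs with h
  · simpa [Fin.ext_iff] using sum_ite_eq univ (⟨m, h⟩ : Fin n) f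
  · exact sum_eq_zero fun k _ => if_neg fun hk : m = k => h (hk ▸ k.isLt)

namespace Matrix

theorem det_eq_sum_filter_of_apply_eq_zero {n R : Type*} [DecidableEq n] [Fintype n]
    [CommRing R] (M : Matrix n n R) (p : n → n → Prop) [DecidableRel p]
    (hM : ∀ i j, ¬ p i j → M i j = 0) :
    M.det = ∑ σ ∈ univ.filter (fun σ : Perm n => ∀ j, p (σ j) j),
      (Perm.sign σ : R) * ∏ j, M (σ j) j := by
  rw [det_apply', sum_filter_of_ne]
  intro σ _ hσ j
  by_contra hj
  exact hσ (mul_eq_zero_of_right _ (prod_eq_zero (mem_univ j) (hM _ _ hj)))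

variable (R : Type*) [CommRing R] (n : ℕ)

def pascal : Matrix (Fin n) (Fin n) R := of fun i j => ((j : ℕ).choose i : R)

def shiftedPascal : Matrix (Fin n) (Fin n) R := of fun i j => (((j : ℕ) + 1).choose i : R)

def unitLowerBidiagonal : Matrix (Fin n) (Fin n) R :=
  of fun i j => (if (i : ℕ) = j then 1 else 0) + (if (i : ℕ) = j + 1 then 1 else 0)

theorem det_pascal : (pascal R n).det = 1 := by
  rw [det_of_isUpperTriangular]
  · simp [pascal]
  · intro i j hij
    simp [pascal, choose_eq_zero_of_lt (show (j : ℕ) < i from hij)]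

theorem det_unitLowerBidiagonal : (unitLowerBidiagonal R n).det = 1 := by
  rw [det_of_isLowerTriangular]
  · simp [unitLowerBidiagonal]
  · intro i j (hij : (i : ℕ) < j)
    simp [unitLowerBidiagonal, hij.ne, show (i : ℕ) ≠ j + 1 by omega]

theorem unitLowerBidiagonal_mul_pascal :
    unitLowerBidiagonal R n * pascal R n = shiftedPascal R n := by
  ext ⟨_ | i, hi⟩ j
  · simp [mul_apply, unitLowerBidiagonal, pascal, shiftedPascal, Fin.sum_univ_ite_val_eq, hi]
  · simp [mul_apply, unitLowerBidiagonal, pascal, shiftedPascal, add_mul, sum_add_distrib,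
      Fin.sum_univ_ite_val_eq, hi, lt_of_succ_lt hi, choose_succ_succ', add_comm]

theorem det_shiftedPascal : (shiftedPascal R n).det = 1 := by
  rw [← unitLowerBidiagonal_mul_pascal, det_mul, det_unitLowerBidiagonal, det_pascal, one_mul]

variable (F : Type*) [Field F]

def invFactorialMatrix : Matrix (Fin n) (Fin n) F :=
  of fun i j => if (i : ℕ) ≤ j + 1 then (((j : ℕ) + 1 - i)! : F)⁻¹ else 0

theorem invFactorialMatrix_eq [CharZero F] :
    invFactorialMatrix n F = diagonal (fun i : Fin n => ((i : ℕ)! : F)) * shiftedPascal F n *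
      diagonal (fun j : Fin n => (((j : ℕ) + 1)! : F)⁻¹) := by
  ext i j
  rw [mul_diagonal, diagonal_mul]
  simp only [invFactorialMatrix, shiftedPascal, of_apply]
  split_ifs with hij
  · rw [cast_choose F hij]
    field_simp [factorial_ne_zero]
  · simp [choose_eq_zero_of_lt (not_le.mp hij)]

theorem det_invFactorialMatrix [CharZero F] : (invFactorialMatrix n F).det = (n ! : F)⁻¹ := by
  rw [invFactorialMatrix_eq, det_mul, det_mul, det_shiftedPascal, det_diagonal, det_diagonal,
    mul_one, ← prod_mul_distrib,
    Fin.prod_univ_eq_prod_range (fun i => (i ! : F) * ((i + 1)! : F)⁻¹)]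
  induction n with
  | zero => simp
  | succ n ih =>
    rw [prod_range_succ, ih, factorial_succ n]
    push_cast
    field_simp

end Matrix

theorem signed_perm_sum_eq_inv_factorial_general (K : ℕ) :
    ∑ σ ∈ Finset.univ.filter
        (fun σ : Equiv.Perm (Fin K) => ∀ j : Fin K, (σ j : ℕ) ≤ (j : ℕ) + 1),
      ((Equiv.Perm.sign σ : ℤ) : ℚ) /
        ∏ j : Fin K, (Nat.factorial ((j : ℕ) + 1 - (σ j : ℕ)) : ℚ) =
      1 / (Nat.factorial K) := by
  rw [one_div, ← det_invFactorialMatrix,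
    det_eq_sum_filter_of_apply_eq_zero (invFactorialMatrix K ℚ)
      (fun i j : Fin K => (i : ℕ) ≤ j + 1) fun i j hij => if_neg hij]
  -- the two filters differ only in their `Decidable` instances
  refine sum_congr (by congr) fun σ hσ => ?_
  rw [div_eq_mul_inv, ← prod_inv_distrib]
  congr 1
  simp only [mem_filter, mem_univ, true_and] at hσ
  exact prod_congr rfl fun j _ => (if_pos (hσ j)).symm

theorem signed_perm_sum_eq_inv_factorial (K : ℕ) (hK : 0 < K) :
    ∑ σ ∈ Finset.univ.filter
        (fun σ : Equiv.Perm (Fin K) => ∀ j : Fin K, (σ j : ℕ) ≤ (j : ℕ) + 1),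
      ((Equiv.Perm.sign σ : ℤ) : ℚ) /
        ∏ j : Fin K, (Nat.factorial ((j : ℕ) + 1 - (σ j : ℕ)) : ℚ) =
      1 / (Nat.factorial K) :=
  signed_perm_sum_eq_inv_factorial_general K
end
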